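/- With the data of the multiply warped example (k ≥ 2; positive integers r₁,…,r_k; n, C, L, ε, I; functions h₁,…,h_k as defined), for all 1 ≤ i, j ≤ k and every s ∈ I one has h_i''(s)/h_i(s) − h_j''(s)/h_j(s) = ((i − j)/(n − 1))·((n − 1)·(i + j) − 2C + 2L·tan(Ls)); in particular, for i ≠ j the function h_i''/h_i − h_j''/h_j does not vanish identically on I. -/

import Mathlib

/-!
Writing `h_i = exp ∘ ψ_i` with `ψ_i(s) = a_i s - b log cos (L s)`, `a_i = i - C/(n-1)` and
`b = 1/(n-1)`, the logarithmic derivative is `ψ_i' = a_i + b L tan (L s)`, so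
`h_i''/h_i = ψ_i'' + ψ_i'^2 = (a_i + b L tan (L s))^2 + b L^2 (1 + tan^2 (L s))`.
Only the square depends on `i`, and the difference of two squares factors into the stated
formula. It is affine in `tan (L s)` with slope `2 L (i - j)/(n - 1) ≠ 0`, so it cannot vanish
at both `s = 0` and `L s = π/4`.
-/

open Real Filter Topology Set

noncomputable def expMulCosRpow (a b L : ℝ) (t : ℝ) : ℝ :=
  exp (a * t) * cos (L * t) ^ (-b)

section expMulCosRpow

variable {a b L t : ℝ}

lemma hasDerivAt_expMulCosRpow (hc : 0 < cos (L * t)) :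
    HasDerivAt (expMulCosRpow a b L)
      (expMulCosRpow a b L t * (a + b * L * tan (L * t))) t := by
  have hexp : HasDerivAt (fun t => exp (a * t)) (exp (a * t) * (a * 1)) t :=
    ((hasDerivAt_id t).const_mul a).exp
  have hcos : HasDerivAt (fun t => cos (L * t)) (-sin (L * t) * (L * 1)) t :=
    ((hasDerivAt_id t).const_mul L).cos
  refine (hexp.mul (hcos.rpow_const (p := -b) (Or.inl hc.ne'))).congr_deriv ?_
  rw [expMulCosRpow, rpow_sub_one hc.ne', tan_eq_sin_div_cos]
  ring

lemma deriv_expMulCosRpow_eventuallyEq (hc : 0 < cos (L * t)) :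
    deriv (expMulCosRpow a b L) =ᶠ[𝓝 t]
      fun y => expMulCosRpow a b L y * (a + b * L * tan (L * y)) := by
  have hpos : ∀ᶠ y in 𝓝 t, 0 < cos (L * y) :=
    continuousAt_const.eventually_lt (by fun_prop : ContinuousAt (fun y => cos (L * y)) t) hc
  filter_upwards [hpos] with y hy using (hasDerivAt_expMulCosRpow hy).deriv

lemma deriv_deriv_expMulCosRpow (hc : 0 < cos (L * t)) :
    deriv (deriv (expMulCosRpow a b L)) t = expMulCosRpow a b L t *
      ((a + b * L * tan (L * t)) ^ 2 + b * L ^ 2 * (1 + tan (L * t) ^ 2)) := by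
  have htan : HasDerivAt (fun y => a + b * L * tan (L * y))
      (b * L * (1 / cos (L * t) ^ 2 * (L * 1))) t :=
    ((hasDerivAt_tan hc.ne').comp t ((hasDerivAt_id t).const_mul L)).const_mul (b * L)
      |>.const_add a
  rw [(deriv_expMulCosRpow_eventuallyEq hc).deriv_eq]
  refine ((hasDerivAt_expMulCosRpow hc).mul htan).deriv.trans ?_
  rw [one_div, ← inv_one_add_tan_sq hc.ne', inv_inv]
  ring

lemma deriv_deriv_div_of_eqOn_expMulCosRpow {f : ℝ → ℝ} {U : Set ℝ} (hU : IsOpen U)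
    (hf : EqOn f (expMulCosRpow a b L) U) (ht : t ∈ U) (hc : 0 < cos (L * t)) :
    deriv (deriv f) t / f t =
      (a + b * L * tan (L * t)) ^ 2 + b * L ^ 2 * (1 + tan (L * t) ^ 2) := by
  have heq : f =ᶠ[𝓝 t] expMulCosRpow a b L := eventually_of_mem (hU.mem_nhds ht) hf
  have hpos : 0 < expMulCosRpow a b L t := mul_pos (exp_pos _) (rpow_pos_of_pos hc _)
  rw [heq.deriv.deriv_eq, heq.eq_of_nhds, deriv_deriv_expMulCosRpow hc,
    mul_div_cancel_left₀ _ hpos.ne']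

end expMulCosRpow

lemma cos_mul_pos_of_mem_Ioo {L s : ℝ} (hL : 0 < L)
    (hs : s ∈ Ioo (-(π / (2 * L))) (π / (2 * L))) : 0 < cos (L * s) := by
  apply cos_pos_of_mem_Ioo
  have hLs : L * (π / (2 * L)) = π / 2 := by field_simp
  constructor <;> nlinarith [hs.1, hs.2]

lemma not_forall_mul_add_mul_tan_eq_zero {L c A B : ℝ} (hL : 0 < L) (hc : c ≠ 0)
    (hB : B ≠ 0) :
    ¬ ∀ s ∈ Ioo (-(π / (2 * L))) (π / (2 * L)), c * (A + B * tan (L * s)) = 0 := by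
  intro hzero
  have hquarter : L * (π / (2 * L) / 2) = π / 4 := by field_simp; ring
  have hpos : 0 < π / (2 * L) := by positivity
  have at_zero := hzero 0 ⟨by linarith, hpos⟩
  have at_quarter := hzero (π / (2 * L) / 2) ⟨by linarith, by linarith⟩
  rw [mul_zero, tan_zero, mul_eq_zero, or_iff_right hc] at at_zero
  rw [hquarter, tan_pi_div_four, mul_eq_zero, or_iff_right hc] at at_quarter
  exact hB (by linarith)

theorem stmt_15_general (k : ℕ) (r : ℕ → ℕ) (n : ℕ) (C L ε : ℝ)
    (hL2 : 0 < ((n : ℝ) - 1) * (∑ j ∈ Finset.Icc 1 k, (r j : ℝ) * (j : ℝ) ^ 2) - C ^ 2)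
    (hL : L = Real.sqrt
      (((n : ℝ) - 1) * (∑ j ∈ Finset.Icc 1 k, (r j : ℝ) * (j : ℝ) ^ 2) - C ^ 2))
    (hε : ε = Real.pi / (2 * L))
    (h : ℕ → ℝ → ℝ)
    (hh : ∀ i ∈ Finset.Icc 1 k, ∀ s ∈ Set.Ioo (-ε) ε,
      h i s = Real.exp (((i : ℝ) - C / ((n : ℝ) - 1)) * s)
        * Real.cos (L * s) ^ (-(1 / ((n : ℝ) - 1)))) :
    (∀ i ∈ Finset.Icc 1 k, ∀ j ∈ Finset.Icc 1 k, ∀ s ∈ Set.Ioo (-ε) ε,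
      deriv (deriv (h i)) s / h i s - deriv (deriv (h j)) s / h j s
        = (((i : ℝ) - (j : ℝ)) / ((n : ℝ) - 1))
          * (((n : ℝ) - 1) * ((i : ℝ) + (j : ℝ)) - 2 * C + 2 * L * Real.tan (L * s))) ∧
    (∀ i ∈ Finset.Icc 1 k, ∀ j ∈ Finset.Icc 1 k, i ≠ j →
      ¬ ∀ s ∈ Set.Ioo (-ε) ε,
        deriv (deriv (h i)) s / h i s - deriv (deriv (h j)) s / h j s = 0) := by
  subst hε
  have hN : (n : ℝ) - 1 ≠ 0 := by
    intro h0
    rw [h0, zero_mul] at hL2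
    nlinarith [sq_nonneg C]
  have hLpos : 0 < L := hL ▸ sqrt_pos.mpr hL2
  have difference : ∀ i ∈ Finset.Icc 1 k, ∀ j ∈ Finset.Icc 1 k,
      ∀ s ∈ Ioo (-(π / (2 * L))) (π / (2 * L)),
      deriv (deriv (h i)) s / h i s - deriv (deriv (h j)) s / h j s
        = ((i - j) / (n - 1)) * ((n - 1) * (i + j) - 2 * C + 2 * L * tan (L * s)) := by
    intro i hi j hj s hs
    have hcos := cos_mul_pos_of_mem_Ioo hLpos hs
    rw [deriv_deriv_div_of_eqOn_expMulCosRpow isOpen_Ioo (hh i hi) hs hcos,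
      deriv_deriv_div_of_eqOn_expMulCosRpow isOpen_Ioo (hh j hj) hs hcos]
    field_simp
    ring
  refine ⟨difference, fun i hi j hj hij hzero => ?_⟩
  have hslope : ((i : ℝ) - j) / (n - 1) ≠ 0 :=
    div_ne_zero (sub_ne_zero.mpr (by exact_mod_cast hij)) hN
  exact not_forall_mul_add_mul_tan_eq_zero hLpos hslope (by positivity)
    fun s hs => (difference i hi j hj s hs).symm.trans (hzero s hs)

/-- In the multiply warped example, for all 1 ≤ i, j ≤ k and s ∈ I,
h_i''/h_i − h_j''/h_j = ((i − j)/(n − 1))·((n − 1)·(i + j) − 2C + 2L·tan(Ls));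
in particular for i ≠ j the function h_i''/h_i − h_j''/h_j does not vanish
identically on I. -/
theorem stmt_15 (k : ℕ) (hk : 2 ≤ k) (r : ℕ → ℕ)
    (hr : ∀ j ∈ Finset.Icc 1 k, 0 < r j)
    (n : ℕ) (hn : n = (∑ j ∈ Finset.Icc 1 k, r j) + 1)
    (C L ε : ℝ) (hC : C = ∑ j ∈ Finset.Icc 1 k, (r j : ℝ) * (j : ℝ))
    (hL2 : 0 < ((n : ℝ) - 1) * (∑ j ∈ Finset.Icc 1 k, (r j : ℝ) * (j : ℝ) ^ 2) - C ^ 2)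
    (hL : L = Real.sqrt
      (((n : ℝ) - 1) * (∑ j ∈ Finset.Icc 1 k, (r j : ℝ) * (j : ℝ) ^ 2) - C ^ 2))
    (hε : ε = Real.pi / (2 * L))
    (h : ℕ → ℝ → ℝ)
    (hh : ∀ i ∈ Finset.Icc 1 k, ∀ s ∈ Set.Ioo (-ε) ε,
      h i s = Real.exp (((i : ℝ) - C / ((n : ℝ) - 1)) * s)
        * Real.cos (L * s) ^ (-(1 / ((n : ℝ) - 1)))) :
    (∀ i ∈ Finset.Icc 1 k, ∀ j ∈ Finset.Icc 1 k, ∀ s ∈ Set.Ioo (-ε) ε,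
      deriv (deriv (h i)) s / h i s - deriv (deriv (h j)) s / h j s
        = (((i : ℝ) - (j : ℝ)) / ((n : ℝ) - 1))
          * (((n : ℝ) - 1) * ((i : ℝ) + (j : ℝ)) - 2 * C + 2 * L * Real.tan (L * s))) ∧
    (∀ i ∈ Finset.Icc 1 k, ∀ j ∈ Finset.Icc 1 k, i ≠ j →
      ¬ ∀ s ∈ Set.Ioo (-ε) ε,
        deriv (deriv (h i)) s / h i s - deriv (deriv (h j)) s / h j s = 0) :=
  stmt_15_general k r n C L ε hL2 hL hε h hh
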